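/- Let p be a bivariate real-zero polynomial of total degree d > 0 with p(0,0) = 1. Then for every ε > 0 there exists a bivariate real-zero polynomial q of total degree d with q(0,0) = 1, each of whose coefficients is within ε of the corresponding coefficient of p, such that for every x2 ∈ ℝ the one-variable polynomial t ↦ t^d · q(1/t, x2/t) (a polynomial in t of degree d) has only simple real zeros. -/

import Mathlib

/-!
For `x = (x₁, x₂)` let `f_x(t) = t ^ d * p (x₁ / t, x₂ / t)`, the degree-`d` homogenization of `p`
on the line `{(t, x₁, x₂)}`. Then `p` is real-zero iff every `f_x` splits over `ℝ`.

For real `c` the operator `1 + c • d/dt` preserves this: at a zero `z ∉ ℝ` of `f + c f'` we would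
have `1 + c ∑ 1 / (z - r) = 0`, the sum running over the (real) roots `r` of `f`, but the
imaginary part of every `1 / (z - r)` has the sign of `-z.im`. It lowers the multiplicity of each
multiple root by one and creates no new multiple root, because at a real non-root
`f' ^ 2 - f f'' = f ^ 2 ∑ 1 / (x - r) ^ 2 > 0` (Laguerre). Hence for `c ≠ 0` all roots of
`(1 + c • d/dt) ^ (d - 1) f_x` are real and simple.

With `c = s x₁` this operator on `f_x` is induced by the linear map `1 + s • T` on polynomials of
total degree `≤ d`, where `T` is `x₁ ∂/∂t` of the homogenization. So `q = (1 + s • T) ^ (d - 1) p`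
works for small `s ≠ 0`: its coefficients are polynomials in `s` that equal those of `p` at `s = 0`.
-/

open MvPolynomial

/-- A bivariate real polynomial is a real-zero polynomial if for every
`(x1, x2) ∈ ℝ²` all complex zeros of `t ↦ p(t x1, t x2)` are real. -/
def IsRealZeroPoly (p : MvPolynomial (Fin 2) ℝ) : Prop :=
  ∀ x1 x2 : ℝ, ∀ t : ℂ,
    eval ![t * (x1 : ℂ), t * (x2 : ℂ)] (MvPolynomial.map (algebraMap ℝ ℂ) p) = 0 →
      t.im = 0

/-- For a bivariate polynomial `p` of total degree at most `d` and `x2 ∈ ℝ`,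
the one-variable polynomial `t ↦ t^d · p(1/t, x2/t)`. -/
noncomputable def checkPoly (d : ℕ) (p : MvPolynomial (Fin 2) ℝ) (x2 : ℝ) :
    Polynomial ℝ :=
  ∑ m ∈ p.support,
    Polynomial.C (coeff m p * x2 ^ (m 1)) * Polynomial.X ^ (d - (m 0 + m 1))

open Filter Topology

namespace Polynomial

section OneAddDeriv

variable {R : Type*}

noncomputable def oneAddDeriv [Semiring R] (c : R) (f : R[X]) : R[X] := f + C c * derivative f

variable [CommRing R] {c : R} {f : R[X]}

theorem degree_C_mul_derivative_lt (hf : f ≠ 0) (c : R) :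
    degree (C c * derivative f) < degree f :=
  smul_eq_C_mul c ▸ (degree_smul_le _ _).trans_lt (degree_derivative_lt hf)

theorem leadingCoeff_oneAddDeriv (hf : f ≠ 0) (c : R) :
    (oneAddDeriv c f).leadingCoeff = f.leadingCoeff :=
  leadingCoeff_add_of_degree_lt' (degree_C_mul_derivative_lt hf c)

theorem oneAddDeriv_ne_zero (hf : f ≠ 0) (c : R) : oneAddDeriv c f ≠ 0 := by
  rw [← leadingCoeff_ne_zero, leadingCoeff_oneAddDeriv hf]
  exact leadingCoeff_ne_zero.2 hf

theorem iterate_oneAddDeriv_ne_zero (hf : f ≠ 0) (c : R) (k : ℕ) :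
    (oneAddDeriv c)^[k] f ≠ 0 :=
  Function.Iterate.rec (· ≠ 0) hf (fun _ hg => oneAddDeriv_ne_zero hg c) k

theorem map_oneAddDeriv {S : Type*} [CommRing S] (φ : R →+* S) (c : R) (f : R[X]) :
    (oneAddDeriv c f).map φ = oneAddDeriv (φ c) (f.map φ) := by
  simp [oneAddDeriv, derivative_map]

theorem wronskian_derivative_mul (g h : R[X]) :
    wronskian (derivative (g * h)) (g * h) =
      h ^ 2 * wronskian (derivative g) g + g ^ 2 * wronskian (derivative h) h := by
  simp only [wronskian, derivative_mul, derivative_add]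
  ring

theorem rootMultiplicity_oneAddDeriv_lt {K : Type*} [Field K] [CharZero K] {c : K} (hc : c ≠ 0)
    {f : K[X]} (hf : f ≠ 0) {x : K} (hx : f.IsRoot x) :
    rootMultiplicity x (oneAddDeriv c f) < rootMultiplicity x f := by
  by_contra! h
  set m := rootMultiplicity x f
  have hdvd : (X - C x) ^ m ∣ C c * derivative f := by
    simpa [oneAddDeriv] using dvd_sub ((pow_dvd_pow _ h).trans (pow_rootMultiplicity_dvd _ x))
      (pow_rootMultiplicity_dvd f x)
  have hf' : derivative f ≠ 0 :=
    derivative_ne_zero.2 (natDegree_pos_iff_degree_pos.2 (degree_pos_of_root hf hx)).ne'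
  have hle := (le_rootMultiplicity_iff hf').2 ((isUnit_C.2 hc.isUnit).dvd_mul_left.1 hdvd)
  rw [derivative_rootMultiplicity_of_root hx] at hle
  have := (rootMultiplicity_pos hf).2 hx
  omega

end OneAddDeriv

section Laguerre

variable {R : Type*} [Field R] [LinearOrder R] [IsStrictOrderedRing R]

theorem eval_wronskian_derivative_prod_X_sub_C_nonneg (s : Multiset R) (x : R) :
    0 ≤ eval x (wronskian (derivative (s.map (X - C ·)).prod) (s.map (X - C ·)).prod) := by
  induction s using Multiset.induction_on with
  | empty => simp [wronskian]
  | cons a s ih =>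
    rw [Multiset.map_cons, Multiset.prod_cons, wronskian_derivative_mul]
    have hlin : eval x (wronskian (derivative (X - C a)) (X - C a)) = 1 := by simp [wronskian]
    simp only [eval_add, eval_mul, eval_pow, hlin]
    exact add_nonneg (mul_nonneg (sq_nonneg _) zero_le_one) (mul_nonneg (sq_nonneg _) ih)

theorem Splits.eval_wronskian_derivative_pos {f : R[X]} (hf : f.Splits) (hdeg : 0 < f.natDegree)
    {x : R} (hx : f.eval x ≠ 0) : 0 < eval x (wronskian (derivative f) f) := by
  obtain ⟨a, ha⟩ := Multiset.exists_mem_of_ne_zero (hf.roots_ne_zero hdeg.ne')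
  obtain ⟨s, hs⟩ := Multiset.exists_cons_of_mem ha
  obtain ⟨b, rfl⟩ : ∃ b, f = C b * ((X - C a) * (s.map (X - C ·)).prod) := by
    refine ⟨f.leadingCoeff, ?_⟩
    conv_lhs => rw [hf.eq_prod_roots, hs, Multiset.map_cons, Multiset.prod_cons]
  have hlin : eval x (wronskian (derivative (X - C a)) (X - C a)) = 1 := by simp [wronskian]
  have hC : wronskian (derivative (C b)) (C b) = 0 := by simp [wronskian]
  simp only [eval_mul, eval_C, mul_ne_zero_iff] at hx
  rw [wronskian_derivative_mul, wronskian_derivative_mul, hC]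
  simp only [eval_add, eval_mul, eval_pow, eval_C, hlin, mul_zero, zero_add, mul_one]
  exact mul_pos (sq_pos_of_ne_zero hx.1) (add_pos_of_pos_of_nonneg (sq_pos_of_ne_zero hx.2.2)
    (mul_nonneg (sq_nonneg _) (eval_wronskian_derivative_prod_X_sub_C_nonneg s x)))

theorem Splits.eval_derivative_oneAddDeriv_ne_zero {f : R[X]} (hf : f.Splits) {c x : R}
    (hfx : f.eval x ≠ 0) (hGx : (oneAddDeriv c f).eval x = 0) :
    (derivative (oneAddDeriv c f)).eval x ≠ 0 := by
  intro hG'x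
  rcases Nat.eq_zero_or_pos f.natDegree with hdeg | hdeg
  · rw [eq_C_of_natDegree_eq_zero hdeg] at hfx hGx
    simp_all [oneAddDeriv]
  have hW := hf.eval_wronskian_derivative_pos hdeg hfx
  simp only [oneAddDeriv, eval_add, eval_mul, eval_C, derivative_add, derivative_mul,
    derivative_C, zero_mul, zero_add] at hGx hG'x
  have hc : c ^ 2 * eval x (wronskian (derivative f) f) = 0 := by
    simp only [wronskian, eval_sub, eval_mul]
    linear_combination (c * eval x (derivative f)) * hGx - (c * eval x f) * hG'x
  have hc0 : c = 0 := by simpa [hW.ne'] using hc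
  simp [hc0, hfx] at hGx

theorem Splits.rootMultiplicity_oneAddDeriv_le {f : R[X]} (hf : f.Splits) (hf0 : f ≠ 0)
    {c : R} (hc : c ≠ 0) {n : ℕ} (hn : ∀ x, rootMultiplicity x f ≤ n) (x : R) :
    rootMultiplicity x (oneAddDeriv c f) ≤ max (n - 1) 1 := by
  by_cases hfx : f.IsRoot x
  · have := rootMultiplicity_oneAddDeriv_lt hc hf0 hfx
    have := hn x
    omega
  have := (one_lt_rootMultiplicity_iff_isRoot (oneAddDeriv_ne_zero hf0 c)).not.2
    fun h => hf.eval_derivative_oneAddDeriv_ne_zero hfx h.1 h.2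
  omega

end Laguerre

theorem im_eq_zero_of_eval_add_mul_derivative_eq_zero {F : ℂ[X]} (hF : F ≠ 0)
    (hroots : ∀ r ∈ F.roots, r.im = 0) (c : ℝ) {z : ℂ}
    (hz : F.eval z + c * F.derivative.eval z = 0) : z.im = 0 := by
  by_cases hFz : F.eval z = 0
  · exact hroots z ((mem_roots hF).2 hFz)
  rw [(IsAlgClosed.splits F).eval_derivative_eq_eval_mul_sum hFz] at hz
  set S := (F.roots.map fun r => 1 / (z - r)).sum
  have hS : 1 + c * S = 0 :=
    (mul_eq_zero.1 (by linear_combination hz : F.eval z * (1 + c * S) = 0)).resolve_left hFz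
  have hroots0 : F.roots ≠ 0 := by
    rintro h
    simp [S, h] at hS
  have hSim : S.im = -z.im * (F.roots.map fun r => (Complex.normSq (z - r))⁻¹).sum := by
    rw [← Multiset.sum_map_mul_left, show S.im = Complex.imAddGroupHom S from rfl,
      map_multiset_sum, Multiset.map_map]
    refine congrArg _ (Multiset.map_congr rfl fun r hr => ?_)
    simp [Complex.inv_im, hroots r hr, div_eq_mul_inv]
  have hpos : 0 < (F.roots.map fun r => (Complex.normSq (z - r))⁻¹).sum := by
    refine (Multiset.sum_lt_sum_of_nonempty hroots0 (f := fun _ => (0 : ℝ))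
      fun r hr => ?_).trans_eq' (by simp)
    refine inv_pos.2 (Complex.normSq_pos.2 (sub_ne_zero.2 ?_))
    rintro rfl
    exact hFz ((mem_roots hF).1 hr)
  have hcS : c * S.im = 0 := by simpa using congrArg Complex.im hS
  have hc : c ≠ 0 := by
    rintro rfl
    simp at hS
  rw [hSim] at hcS
  simpa [hc, hpos.ne'] using hcS

theorem splits_of_forall_aeval_eq_zero_im_eq_zero {f : ℝ[X]}
    (h : ∀ z : ℂ, aeval z f = 0 → z.im = 0) : f.Splits := by
  refine Splits.of_splits_map Complex.ofRealHom (IsAlgClosed.splits _) fun z hz => ?_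
  have him : z.im = 0 := h z (by rw [aeval_def, eval₂_eq_eval_map]; exact (mem_roots'.1 hz).2)
  exact ⟨z.re, Complex.ext (by simp) (by simp [him])⟩

theorem Splits.im_eq_zero_of_aeval_eq_zero {f : ℝ[X]} (hf : f.Splits) (hf0 : f ≠ 0) {z : ℂ}
    (hz : aeval z f = 0) : z.im = 0 := by
  obtain ⟨x, rfl⟩ := hf.mem_range_of_isRoot hf0 (i := Complex.ofRealHom)
    (by rwa [aeval_def, eval₂_eq_eval_map] at hz)
  simp

theorem splits_oneAddDeriv {f : ℝ[X]} (hf : f.Splits) (c : ℝ) : (oneAddDeriv c f).Splits := by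
  rcases eq_or_ne f 0 with rfl | hf0
  · simp [oneAddDeriv]
  refine Splits.of_splits_map Complex.ofRealHom (IsAlgClosed.splits _) fun z hz => ?_
  have hroots : ∀ r ∈ (f.map Complex.ofRealHom).roots, r.im = 0 := by
    intro r hr
    rw [hf.roots_map] at hr
    obtain ⟨x, -, rfl⟩ := Multiset.mem_map.1 hr
    simp
  rw [map_oneAddDeriv, mem_roots', IsRoot, oneAddDeriv] at hz
  have him := im_eq_zero_of_eval_add_mul_derivative_eq_zero (Polynomial.map_ne_zero hf0) hroots c
    (z := z) (by simpa using hz.2)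
  exact ⟨z.re, Complex.ext (by simp) (by simp [him])⟩

theorem splits_iterate_oneAddDeriv {f : ℝ[X]} (hf : f.Splits) (c : ℝ) (k : ℕ) :
    ((oneAddDeriv c)^[k] f).Splits :=
  Function.Iterate.rec Splits hf (fun _ hg => splits_oneAddDeriv hg c) k

theorem Splits.separable_iterate_oneAddDeriv {f : ℝ[X]} (hf : f.Splits) (hf0 : f ≠ 0)
    {c : ℝ} (hc : c ≠ 0) : ((oneAddDeriv c)^[f.natDegree - 1] f).Separable := by
  classical
  have hmult : ∀ k x, rootMultiplicity x ((oneAddDeriv c)^[k] f) ≤ max (f.natDegree - k) 1 := by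
    intro k
    induction k with
    | zero =>
      intro x
      rw [← count_roots]
      exact (Multiset.count_le_card _ _).trans ((card_roots' f).trans (le_max_left _ _))
    | succ k ih =>
      intro x
      rw [Function.iterate_succ_apply']
      refine ((splits_iterate_oneAddDeriv hf c k).rootMultiplicity_oneAddDeriv_le
        (iterate_oneAddDeriv_ne_zero hf0 c k) hc ih x).trans ?_
      omega
  rw [← nodup_roots_iff_of_splits (iterate_oneAddDeriv_ne_zero hf0 c _)
    (splits_iterate_oneAddDeriv hf c _), Multiset.nodup_iff_count_le_one]
  intro x
  rw [count_roots]
  exact (hmult _ x).trans (by omega)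

end Polynomial

theorem coeff_pow_one_add_smul_apply {σ : Type*} (T : Module.End ℝ (MvPolynomial σ ℝ)) (s : ℝ)
    (k : ℕ) (p : MvPolynomial σ ℝ) (m : σ →₀ ℕ) :
    coeff m (((1 + s • T) ^ k) p) =
      ∑ j ∈ Finset.range (k + 1), s ^ j * k.choose j * coeff m ((T ^ j) p) := by
  rw [add_comm, (Commute.one_right (s • T)).add_pow]
  simp only [LinearMap.sum_apply, coeff_sum, smul_pow, one_pow, mul_one, Module.End.mul_apply,
    Module.End.natCast_apply, map_nsmul, LinearMap.smul_apply, coeff_smul, smul_eq_mul]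
  exact Finset.sum_congr rfl fun j _ => by rw [nsmul_eq_mul]; ring

theorem eventually_forall_abs_coeff_pow_one_add_smul_sub_lt {σ : Type*}
    (T : Module.End ℝ (MvPolynomial σ ℝ)) (k : ℕ) (p : MvPolynomial σ ℝ) {ε : ℝ} (hε : 0 < ε) :
    ∀ᶠ s in 𝓝 (0 : ℝ), ∀ m, |coeff m (((1 + s • T) ^ k) p) - coeff m p| < ε := by
  classical
  set U := (Finset.range (k + 1)).biUnion fun j => ((T ^ j) p).support
  have hU : ∀ m ∉ U, ∀ j ∈ Finset.range (k + 1), coeff m ((T ^ j) p) = 0 := fun m hm j hj =>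
    notMem_support_iff.1 fun h => hm (Finset.mem_biUnion.2 ⟨j, hj, h⟩)
  have hlim (m) :
      Tendsto (fun s : ℝ => coeff m (((1 + s • T) ^ k) p)) (𝓝 0) (𝓝 (coeff m p)) := by
    have hcont : Continuous fun s : ℝ => coeff m (((1 + s • T) ^ k) p) := by
      simp only [coeff_pow_one_add_smul_apply]
      fun_prop
    simpa using hcont.tendsto 0
  filter_upwards [(Finset.eventually_all U).2 fun m _ => Metric.tendsto_nhds.1 (hlim m) ε hε]
    with s hs m
  by_cases hm : m ∈ U
  · exact hs m hm
  · have hp : coeff m p = 0 := by simpa using hU m hm 0 (by simp)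
    rw [coeff_pow_one_add_smul_apply,
      Finset.sum_eq_zero fun j hj => by rw [hU m hm j hj, mul_zero], hp, sub_zero, abs_zero]
    exact hε

theorem add_le_of_mem_support {p : MvPolynomial (Fin 2) ℝ} {d : ℕ} (hp : p.totalDegree ≤ d)
    {m : Fin 2 →₀ ℕ} (hm : m ∈ p.support) : m 0 + m 1 ≤ d := by
  have := (le_totalDegree hm).trans hp
  rwa [Finsupp.sum_fintype _ _ fun _ => rfl, Fin.sum_univ_two] at this

section Homogenization

variable (d : ℕ)

/-- `t ↦ t ^ d * p (x₁ / t, x₂ / t)`: the degree-`d` homogenization of `p` on the line through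
`(x₁, x₂)`. On monomials of degree `> d` the exponent `d - (m 0 + m 1)` is truncated to `0`; this
junk value is harmless and makes `homogLine_homogDeriv` hold for every `p`. -/
noncomputable def homogLine (x₁ x₂ : ℝ) : MvPolynomial (Fin 2) ℝ →ₗ[ℝ] Polynomial ℝ :=
  (basisMonomials (Fin 2) ℝ).constr ℝ fun m =>
    Polynomial.C (x₁ ^ m 0 * x₂ ^ m 1) * Polynomial.X ^ (d - (m 0 + m 1))

/-- If `P (t, x)` is the degree-`d` homogenization of `p`, this is `x ↦ x₁ * ∂P/∂t (1, x)`. -/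
noncomputable def homogDeriv : Module.End ℝ (MvPolynomial (Fin 2) ℝ) :=
  (basisMonomials (Fin 2) ℝ).constr ℝ fun m =>
    monomial (m + Finsupp.single 0 1) ((d - (m 0 + m 1) : ℕ) : ℝ)

variable {d}

theorem monomial_eq_smul_basisMonomials (m : Fin 2 →₀ ℕ) (a : ℝ) :
    monomial m a = a • basisMonomials (Fin 2) ℝ m := by
  simp [smul_monomial]

theorem homogLine_monomial (x₁ x₂ : ℝ) (m : Fin 2 →₀ ℕ) (a : ℝ) :
    homogLine d x₁ x₂ (monomial m a) =
      Polynomial.C (a * x₁ ^ m 0 * x₂ ^ m 1) * Polynomial.X ^ (d - (m 0 + m 1)) := by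
  rw [monomial_eq_smul_basisMonomials, map_smul, homogLine, Module.Basis.constr_basis,
    Polynomial.smul_eq_C_mul, ← mul_assoc, ← Polynomial.C_mul, mul_assoc]

theorem homogDeriv_monomial (m : Fin 2 →₀ ℕ) (a : ℝ) :
    homogDeriv d (monomial m a) =
      monomial (m + Finsupp.single 0 1) ((d - (m 0 + m 1) : ℕ) * a) := by
  rw [monomial_eq_smul_basisMonomials, map_smul, homogDeriv, Module.Basis.constr_basis,
    smul_monomial, smul_eq_mul, mul_comm]

theorem homogLine_eq_sum (x₁ x₂ : ℝ) (p : MvPolynomial (Fin 2) ℝ) :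
    homogLine d x₁ x₂ p = ∑ m ∈ p.support,
      Polynomial.C (coeff m p * x₁ ^ m 0 * x₂ ^ m 1) * Polynomial.X ^ (d - (m 0 + m 1)) := by
  conv_lhs => rw [p.as_sum]
  simp only [map_sum, homogLine_monomial]

theorem checkPoly_eq_homogLine (q : MvPolynomial (Fin 2) ℝ) (x₂ : ℝ) :
    checkPoly d q x₂ = homogLine d 1 x₂ q := by
  simp [checkPoly, homogLine_eq_sum]

theorem homogLine_homogDeriv (x₁ x₂ : ℝ) (p : MvPolynomial (Fin 2) ℝ) :
    homogLine d x₁ x₂ (homogDeriv d p) =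
      Polynomial.C x₁ * Polynomial.derivative (homogLine d x₁ x₂ p) := by
  induction p using MvPolynomial.induction_on' with
  | monomial m a =>
    rw [homogDeriv_monomial, homogLine_monomial, homogLine_monomial,
      Polynomial.derivative_C_mul_X_pow]
    simp only [Finsupp.add_apply, Finsupp.single_eq_same,
      Finsupp.single_eq_of_ne (by decide : (1 : Fin 2) ≠ 0), add_zero]
    rcases Nat.eq_zero_or_pos (d - (m 0 + m 1)) with h | h
    · simp [h]
    · rw [show d - (m 0 + 1 + m 1) = d - (m 0 + m 1) - 1 by omega, ← mul_assoc,
        ← Polynomial.C_mul]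
      congr 2
      ring
  | add p q hp hq => simp only [map_add, hp, hq, mul_add]

theorem totalDegree_homogDeriv_le (p : MvPolynomial (Fin 2) ℝ) :
    (homogDeriv d p).totalDegree ≤ d := by
  induction p using MvPolynomial.induction_on' with
  | monomial m a =>
    rw [homogDeriv_monomial]
    rcases Nat.eq_zero_or_pos (d - (m 0 + m 1)) with h | h
    · simp [h]
    · refine (totalDegree_monomial_le _ _).trans ?_
      rw [Finsupp.sum_fintype _ _ fun _ => rfl, Fin.sum_univ_two]
      simp only [Finsupp.add_apply, Finsupp.single_eq_same,
        Finsupp.single_eq_of_ne (by decide : (1 : Fin 2) ≠ 0), add_zero, id]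
      omega
  | add p q hp hq =>
    exact (map_add (homogDeriv d) p q) ▸ (totalDegree_add _ _).trans (max_le hp hq)

theorem coeff_zero_homogDeriv (p : MvPolynomial (Fin 2) ℝ) : coeff 0 (homogDeriv d p) = 0 := by
  induction p using MvPolynomial.induction_on' with
  | monomial m a =>
    rw [homogDeriv_monomial, coeff_monomial, if_neg]
    intro h
    simpa using congrArg (· 0) h
  | add p q hp hq => rw [map_add, coeff_add, hp, hq, add_zero]

theorem eval_line_eq_pow_mul_aeval_homogLine {p : MvPolynomial (Fin 2) ℝ}
    (hp : p.totalDegree ≤ d) (x₁ x₂ : ℝ) {t : ℂ} (ht : t ≠ 0) :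
    eval ![t * x₁, t * x₂] (map (algebraMap ℝ ℂ) p) =
      t ^ d * Polynomial.aeval t⁻¹ (homogLine d x₁ x₂ p) := by
  conv_lhs => rw [p.as_sum]
  simp only [homogLine_eq_sum, map_sum, Finset.mul_sum]
  refine Finset.sum_congr rfl fun m hm => ?_
  obtain ⟨k, hk⟩ := Nat.exists_eq_add_of_le (add_le_of_mem_support hp hm)
  simp [eval_monomial, Finsupp.prod_fintype, Fin.prod_univ_two, hk]
  field_simp
  ring

theorem homogLine_monic {p : MvPolynomial (Fin 2) ℝ} (hp : p.totalDegree ≤ d)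
    (h0 : coeff 0 p = 1) (x₁ x₂ : ℝ) :
    (homogLine d x₁ x₂ p).Monic ∧ (homogLine d x₁ x₂ p).natDegree = d := by
  have hle : (homogLine d x₁ x₂ p).natDegree ≤ d := by
    rw [homogLine_eq_sum]
    exact Polynomial.natDegree_sum_le_of_forall_le _ _ fun m _ =>
      (Polynomial.natDegree_C_mul_X_pow_le _ _).trans (Nat.sub_le _ _)
  have hcoeff : (homogLine d x₁ x₂ p).coeff d = 1 := by
    rw [homogLine_eq_sum, Polynomial.finsetSum_coeff,
      Finset.sum_eq_single_of_mem 0 (mem_support_iff.2 (h0 ▸ one_ne_zero))]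
    · simp [h0]
    · intro m hm hm0
      rw [Polynomial.coeff_C_mul_X_pow, if_neg]
      have := add_le_of_mem_support hp hm
      have : m 0 + m 1 ≠ 0 := fun h =>
        hm0 (Finsupp.ext fun i => by fin_cases i <;> simp <;> omega)
      omega
  exact ⟨Polynomial.monic_of_natDegree_le_of_coeff_eq_one d hle hcoeff,
    hle.antisymm (Polynomial.le_natDegree_of_ne_zero (hcoeff ▸ one_ne_zero))⟩

theorem isRealZeroPoly_iff {p : MvPolynomial (Fin 2) ℝ} (hp : p.totalDegree ≤ d) :
    IsRealZeroPoly p ↔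
      ∀ x₁ x₂ : ℝ, ∀ z : ℂ, Polynomial.aeval z (homogLine d x₁ x₂ p) = 0 → z.im = 0 := by
  refine ⟨fun h x₁ x₂ z hz => ?_, fun h x₁ x₂ t ht => ?_⟩
  · rcases eq_or_ne z 0 with rfl | hz0
    · rfl
    have := h x₁ x₂ z⁻¹ (by
      rw [eval_line_eq_pow_mul_aeval_homogLine hp x₁ x₂ (inv_ne_zero hz0), inv_inv, hz, mul_zero])
    simpa [hz0] using this
  · rcases eq_or_ne t 0 with rfl | ht0
    · rfl
    rw [eval_line_eq_pow_mul_aeval_homogLine hp x₁ x₂ ht0] at ht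
    simpa [ht0] using h x₁ x₂ t⁻¹ ((mul_eq_zero.1 ht).resolve_left (pow_ne_zero _ ht0))

end Homogenization

section Perturbation

variable {d : ℕ} (s : ℝ)

theorem homogLine_one_add_smul_homogDeriv (x₁ x₂ : ℝ) (p : MvPolynomial (Fin 2) ℝ) :
    homogLine d x₁ x₂ ((1 + s • homogDeriv d) p) =
      Polynomial.oneAddDeriv (s * x₁) (homogLine d x₁ x₂ p) := by
  simp [Polynomial.oneAddDeriv, homogLine_homogDeriv, Polynomial.smul_eq_C_mul, mul_assoc]

theorem homogLine_pow_one_add_smul_homogDeriv (x₁ x₂ : ℝ) (k : ℕ)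
    (p : MvPolynomial (Fin 2) ℝ) :
    homogLine d x₁ x₂ (((1 + s • homogDeriv d) ^ k) p) =
      (Polynomial.oneAddDeriv (s * x₁))^[k] (homogLine d x₁ x₂ p) := by
  rw [Module.End.pow_apply]
  exact Function.Semiconj.iterate_right (homogLine_one_add_smul_homogDeriv s x₁ x₂) k p

theorem totalDegree_pow_one_add_smul_homogDeriv_le {p : MvPolynomial (Fin 2) ℝ}
    (hp : p.totalDegree ≤ d) (k : ℕ) : (((1 + s • homogDeriv d) ^ k) p).totalDegree ≤ d := by
  rw [Module.End.pow_apply]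
  refine Set.MapsTo.iterate (s := {q : MvPolynomial (Fin 2) ℝ | q.totalDegree ≤ d})
    (fun q hq => ?_) k hp
  exact (totalDegree_add _ _).trans
    (max_le hq ((totalDegree_smul_le _ _).trans (totalDegree_homogDeriv_le _)))

theorem coeff_zero_pow_one_add_smul_homogDeriv (k : ℕ) (p : MvPolynomial (Fin 2) ℝ) :
    coeff 0 (((1 + s • homogDeriv d) ^ k) p) = coeff 0 p := by
  rw [Module.End.pow_apply]
  exact (Function.Semiconj.iterate_right (f := coeff 0) (gb := id)
    (fun q => by simp [coeff_zero_homogDeriv]) k p).trans (by simp)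

theorem exists_ne_zero_totalDegree_pow_one_add_smul_homogDeriv_eq
    {p : MvPolynomial (Fin 2) ℝ} (hp0 : p ≠ 0) (hdeg : p.totalDegree = d) (k : ℕ) {ε : ℝ}
    (hε : 0 < ε) : ∃ s : ℝ, s ≠ 0 ∧ (((1 + s • homogDeriv d) ^ k) p).totalDegree = d ∧
      ∀ m, |coeff m (((1 + s • homogDeriv d) ^ k) p) - coeff m p| < ε := by
  obtain ⟨m₀, hm₀, hm₀d⟩ := Finset.exists_mem_eq_sup p.support (support_nonempty.2 hp0)
    fun m => m.sum fun _ e => e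
  obtain ⟨s, ⟨hclose, htop⟩, hs0⟩ :=
    ((((eventually_forall_abs_coeff_pow_one_add_smul_sub_lt (homogDeriv d) k p hε).and
      (eventually_forall_abs_coeff_pow_one_add_smul_sub_lt (homogDeriv d) k p
        (abs_pos.2 (mem_support_iff.1 hm₀)))).filter_mono nhdsWithin_le_nhds).and
      (self_mem_nhdsWithin (s := ({0}ᶜ : Set ℝ)))).exists
  refine ⟨s, hs0, (totalDegree_pow_one_add_smul_homogDeriv_le s hdeg.le k).antisymm ?_, hclose⟩
  exact (hm₀d.symm.trans hdeg).ge.trans <|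
    le_totalDegree (mem_support_iff.2 fun h => by simpa [h] using htop m₀)

end Perturbation

section RealZero

variable {d : ℕ} {p : MvPolynomial (Fin 2) ℝ}

theorem splits_homogLine (hp : p.totalDegree ≤ d) (hrz : IsRealZeroPoly p) (x₁ x₂ : ℝ) :
    (homogLine d x₁ x₂ p).Splits :=
  Polynomial.splits_of_forall_aeval_eq_zero_im_eq_zero ((isRealZeroPoly_iff hp).1 hrz x₁ x₂)

theorem isRealZeroPoly_pow_one_add_smul_homogDeriv (hp : p.totalDegree ≤ d)
    (h0 : coeff 0 p = 1) (hrz : IsRealZeroPoly p) (s : ℝ) (k : ℕ) :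
    IsRealZeroPoly (((1 + s • homogDeriv d) ^ k) p) := by
  refine (isRealZeroPoly_iff (totalDegree_pow_one_add_smul_homogDeriv_le s hp k)).2
    fun x₁ x₂ z hz => ?_
  rw [homogLine_pow_one_add_smul_homogDeriv] at hz
  exact (Polynomial.splits_iterate_oneAddDeriv (splits_homogLine hp hrz x₁ x₂) _ _
    ).im_eq_zero_of_aeval_eq_zero
      (Polynomial.iterate_oneAddDeriv_ne_zero (homogLine_monic hp h0 x₁ x₂).1.ne_zero _ _) hz

theorem separable_homogLine_pow_one_add_smul_homogDeriv (hp : p.totalDegree ≤ d)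
    (h0 : coeff 0 p = 1) (hrz : IsRealZeroPoly p) {s x₁ : ℝ} (hs : s ≠ 0) (hx₁ : x₁ ≠ 0)
    (x₂ : ℝ) : (homogLine d x₁ x₂ (((1 + s • homogDeriv d) ^ (d - 1)) p)).Separable := by
  have hsep := (splits_homogLine hp hrz x₁ x₂).separable_iterate_oneAddDeriv
    (homogLine_monic hp h0 x₁ x₂).1.ne_zero (mul_ne_zero hs hx₁)
  rwa [(homogLine_monic hp h0 x₁ x₂).2, ← homogLine_pow_one_add_smul_homogDeriv] at hsep

end RealZero

theorem stmt14_general (d : ℕ) (p : MvPolynomial (Fin 2) ℝ)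
    (hdeg : p.totalDegree = d) (h0 : coeff 0 p = 1) (hrz : IsRealZeroPoly p) :
    ∀ ε : ℝ, 0 < ε → ∃ q : MvPolynomial (Fin 2) ℝ,
      IsRealZeroPoly q ∧ q.totalDegree = d ∧ coeff 0 q = 1 ∧
      (∀ m : Fin 2 →₀ ℕ, |coeff m q - coeff m p| ≤ ε) ∧
      ∀ x2 : ℝ, ∀ z : ℂ,
        Polynomial.aeval z (checkPoly d q x2) = 0 →
          z.im = 0 ∧ Polynomial.aeval z (Polynomial.derivative (checkPoly d q x2)) ≠ 0 := by
  intro ε hε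
  obtain ⟨s, hs, hqdeg, hclose⟩ := exists_ne_zero_totalDegree_pow_one_add_smul_homogDeriv_eq
    (by rintro rfl; simp at h0) hdeg (d - 1) hε
  have hqrz := isRealZeroPoly_pow_one_add_smul_homogDeriv hdeg.le h0 hrz s (d - 1)
  refine ⟨_, hqrz, hqdeg, by rw [coeff_zero_pow_one_add_smul_homogDeriv, h0],
    fun m => (hclose m).le, fun x₂ z hz => ?_⟩
  rw [checkPoly_eq_homogLine] at hz ⊢
  exact ⟨(isRealZeroPoly_iff hqdeg.le).1 hqrz 1 x₂ z hz,
    (separable_homogLine_pow_one_add_smul_homogDeriv hdeg.le h0 hrz hs one_ne_zero x₂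
      ).aeval_derivative_ne_zero hz⟩

theorem stmt14 (d : ℕ) (hd : 0 < d) (p : MvPolynomial (Fin 2) ℝ)
    (hdeg : p.totalDegree = d) (h0 : coeff 0 p = 1) (hrz : IsRealZeroPoly p) :
    ∀ ε : ℝ, 0 < ε → ∃ q : MvPolynomial (Fin 2) ℝ,
      IsRealZeroPoly q ∧ q.totalDegree = d ∧ coeff 0 q = 1 ∧
      (∀ m : Fin 2 →₀ ℕ, |coeff m q - coeff m p| ≤ ε) ∧
      ∀ x2 : ℝ, ∀ z : ℂ,
        Polynomial.aeval z (checkPoly d q x2) = 0 →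
          z.im = 0 ∧ Polynomial.aeval z (Polynomial.derivative (checkPoly d q x2)) ≠ 0 :=
  stmt14_general d p hdeg h0 hrz
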